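/- arXiv:1906.03105 — 2 statements merged into one kernel-verified Lean document; each statement's English description precedes it below -/
import Mathlib

section
/- Let Σ_B ∈ R^{n×n} be symmetric positive semidefinite, R ∈ R^{(m-n)×(m-n)} symmetric positive definite, M = 0, A ∈ R^{(m-n)×n}, and G = Σ_B Aᵀ (A Σ_B Aᵀ + R)⁻¹. Then the posterior covariance Σ_B - G A Σ_B is symmetric positive semidefinite, and Σ_B - (Σ_B - G A Σ_B) = G A Σ_B is also positive semidefinite; that is, LG reconciliation never increases the covariance of the bottom forecasts (in the Loewner order). -/
open Matrix

/-!
With `S = A Σ Aᴴ + R` and the gain `G = Σ Aᴴ S⁻¹`, the reduction `G A Σ = (A Σ)ᴴ S⁻¹ (A Σ)` is a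
congruence of `S⁻¹ ⪰ 0`, while the posterior covariance has the Joseph form
`Σ - G A Σ = (1 - G A) Σ (1 - G A)ᴴ + G R Gᴴ`, a sum of congruences of `Σ ⪰ 0` and `R ⪰ 0`.
-/

namespace Matrix

variable {m n K : Type*} [Fintype m] [Fintype n] [DecidableEq m] [CommRing K] [StarRing K]

noncomputable def kalmanGain (P : Matrix n n K) (R : Matrix m m K) (A : Matrix m n K) :
    Matrix n m K :=
  P * Aᴴ * (A * P * Aᴴ + R)⁻¹

theorem sub_kalmanGain_mul_mul_eq_joseph [DecidableEq n] {P : Matrix n n K} {R : Matrix m m K}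
    (A : Matrix m n K) (hP : P.IsHermitian) (hR : R.IsHermitian)
    (hS : IsUnit (A * P * Aᴴ + R).det) :
    P - kalmanGain P R A * A * P =
      (1 - kalmanGain P R A * A) * P * (1 - kalmanGain P R A * A)ᴴ +
        kalmanGain P R A * R * (kalmanGain P R A)ᴴ := by
  rw [kalmanGain]
  set S := A * P * Aᴴ + R with hS_def
  have hSH : Sᴴ = S := ((isHermitian_mul_mul_conjTranspose A hP).add hR).eq
  have hRS : R = S - A * P * Aᴴ := by rw [hS_def]; abel
  rw [hRS]
  simp only [conjTranspose_sub, conjTranspose_one, conjTranspose_mul, conjTranspose_nonsing_inv,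
    hSH, hP.eq, conjTranspose_conjTranspose, Matrix.sub_mul, Matrix.mul_sub, Matrix.one_mul,
    Matrix.mul_one, Matrix.mul_assoc, mul_nonsing_inv_cancel_left S _ hS]
  abel

variable [PartialOrder K] [StarOrderedRing K] {P : Matrix n n K} {R : Matrix m m K}

theorem posSemidef_kalmanGain_mul_mul (A : Matrix m n K) (hP : P.PosSemidef)
    (hR : R.PosSemidef) : (kalmanGain P R A * A * P).PosSemidef := by
  have hS : (A * P * Aᴴ + R).PosSemidef := (hP.mul_mul_conjTranspose_same A).add hR
  convert hS.inv.conjTranspose_mul_mul_same (A * P) using 1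
  simp [kalmanGain, conjTranspose_mul, hP.isHermitian.eq, Matrix.mul_assoc]

theorem posSemidef_sub_kalmanGain_mul_mul [DecidableEq n] (A : Matrix m n K)
    (hP : P.PosSemidef) (hR : R.PosSemidef) (hS : IsUnit (A * P * Aᴴ + R).det) :
    (P - kalmanGain P R A * A * P).PosSemidef := by
  rw [sub_kalmanGain_mul_mul_eq_joseph A hP.isHermitian hR.isHermitian hS]
  exact (hP.mul_mul_conjTranspose_same _).add (hR.mul_mul_conjTranspose_same _)

end Matrix

/-- LG reconciliation never increases the covariance of the bottom forecasts:
0 ⪯ Σ_B - G A Σ_B ⪯ Σ_B in the Loewner order. -/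
theorem stmt_10 {p n : ℕ} (SigB : Matrix (Fin n) (Fin n) ℝ) (R : Matrix (Fin p) (Fin p) ℝ)
    (A : Matrix (Fin p) (Fin n) ℝ)
    (hSig : SigB.PosSemidef) (hR : R.PosDef)
    (G : Matrix (Fin n) (Fin p) ℝ)
    (hG : G = SigB * Aᵀ * (A * SigB * Aᵀ + R)⁻¹) :
    (SigB - G * A * SigB).PosSemidef ∧ (G * A * SigB).PosSemidef := by
  obtain rfl : G = kalmanGain SigB R A := by
    rw [hG, kalmanGain, conjTranspose_eq_transpose_of_trivial]
  have hSpd : (A * SigB * Aᴴ + R).PosDef :=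
    PosDef.posSemidef_add (hSig.mul_mul_conjTranspose_same A) hR
  have hS : IsUnit (A * SigB * Aᴴ + R).det := (isUnit_iff_isUnit_det _).mp hSpd.isUnit
  exact ⟨posSemidef_sub_kalmanGain_mul_mul A hSig hR.posSemidef hS,
    posSemidef_kalmanGain_mul_mul A hSig hR.posSemidef⟩
end

section
/- Let W ∈ R^{m×m} be symmetric positive definite and S ∈ R^{m×n} of full column rank. Among all matrices P ∈ R^{n×m} with P S = I_n, the matrix P* = (Sᵀ W⁻¹ S)⁻¹ Sᵀ W⁻¹ minimizes the trace of S P W Pᵀ Sᵀ; i.e., for every P with P S = I_n, trace(S P* W P*ᵀ Sᵀ) ≤ trace(S P W Pᵀ Sᵀ). -/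
/-!
Write `P = P⋆ + D`. The constraint `P S = I = P⋆ S` forces `D S = 0`, and then the cross term
`P⋆ W Dᵀ = (Sᵀ W⁻¹ S)⁻¹ (D S)ᵀ` vanishes, so `S P W Pᵀ Sᵀ = S P⋆ W P⋆ᵀ Sᵀ + (S D) W (S D)ᵀ`.
The last summand is positive semidefinite, hence has nonnegative trace.
-/

open Matrix

variable {ι κ : Type*} [Fintype ι]

theorem Matrix.mul_mul_transpose_add_of_mul_mul_transpose_eq_zero {R : Type*} [CommRing R]
    {W : Matrix ι ι R} (hW : W.IsSymm) {P D : Matrix κ ι R} (hPD : P * W * Dᵀ = 0) :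
    (P + D) * W * (P + D)ᵀ = P * W * Pᵀ + D * W * Dᵀ := by
  have hDP : D * W * Pᵀ = 0 := by
    simpa only [transpose_mul, transpose_transpose, hW.eq, transpose_zero, Matrix.mul_assoc]
      using congrArg transpose hPD
  simp only [transpose_add, Matrix.add_mul, Matrix.mul_add, hPD, hDP, add_zero, zero_add]

theorem Matrix.PosSemidef.trace_mul_mul_transpose_nonneg [Fintype κ] {W : Matrix ι ι ℝ}
    (hW : W.PosSemidef) (B : Matrix κ ι ℝ) : 0 ≤ (B * W * Bᵀ).trace :=
  (hW.mul_mul_conjTranspose_same B).trace_nonneg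

section

variable [Fintype κ] [DecidableEq ι] [DecidableEq κ]

noncomputable def mintMatrix (W : Matrix ι ι ℝ) (S : Matrix ι κ ℝ) : Matrix κ ι ℝ :=
  (Sᵀ * W⁻¹ * S)⁻¹ * Sᵀ * W⁻¹

variable {W : Matrix ι ι ℝ} {S : Matrix ι κ ℝ}

omit [DecidableEq κ] in
theorem Matrix.PosDef.transpose_mul_inv_mul (hW : W.PosDef) (hS : Function.Injective S.mulVec) :
    (Sᵀ * W⁻¹ * S).PosDef :=
  hW.inv.conjTranspose_mul_mul_same hS

theorem mintMatrix_mul_eq_one (hW : W.PosDef) (hS : Function.Injective S.mulVec) :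
    mintMatrix W S * S = 1 := by
  rw [mintMatrix, Matrix.mul_assoc, Matrix.mul_assoc, ← Matrix.mul_assoc Sᵀ,
    nonsing_inv_mul _ ((hW.transpose_mul_inv_mul hS).isUnit.map detMonoidHom)]

theorem mintMatrix_mul_mul_transpose_eq_zero (hW : IsUnit W) {D : Matrix κ ι ℝ}
    (hD : D * S = 0) :
    mintMatrix W S * W * Dᵀ = 0 := by
  rw [mintMatrix, Matrix.mul_assoc _ W⁻¹, nonsing_inv_mul _ (hW.map detMonoidHom),
    Matrix.mul_one, Matrix.mul_assoc, ← transpose_mul, hD, transpose_zero, Matrix.mul_zero]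

end

/-- MinT optimality: among all P with P S = I, the MinT matrix minimizes the trace
of the covariance S P W Pᵀ Sᵀ of the reconciled forecast errors. -/
theorem stmt_12 {m n : ℕ} (W : Matrix (Fin m) (Fin m) ℝ) (hW : W.PosDef)
    (S : Matrix (Fin m) (Fin n) ℝ) (hS : Function.Injective S.mulVec)
    (Pstar : Matrix (Fin n) (Fin m) ℝ) (hPstar : Pstar = (Sᵀ * W⁻¹ * S)⁻¹ * Sᵀ * W⁻¹) :
    ∀ P : Matrix (Fin n) (Fin m) ℝ, P * S = 1 →
      (S * Pstar * W * Pstarᵀ * Sᵀ).trace ≤ (S * P * W * Pᵀ * Sᵀ).trace := by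
  intro P hP
  obtain rfl : Pstar = mintMatrix W S := hPstar
  set D := P - mintMatrix W S
  have hDS : D * S = 0 := by rw [Matrix.sub_mul, hP, mintMatrix_mul_eq_one hW hS, sub_self]
  have hsplit := mul_mul_transpose_add_of_mul_mul_transpose_eq_zero
    (isHermitian_iff_isSymm.mp hW.isHermitian) (mintMatrix_mul_mul_transpose_eq_zero hW.isUnit hDS)
  rw [add_sub_cancel] at hsplit
  have hwhole : S * P * W * Pᵀ * Sᵀ
      = S * mintMatrix W S * W * (mintMatrix W S)ᵀ * Sᵀ + (S * D) * W * (S * D)ᵀ :=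
    calc S * P * W * Pᵀ * Sᵀ = S * (P * W * Pᵀ) * Sᵀ := by simp only [Matrix.mul_assoc]
      _ = _ := by
        rw [hsplit]
        simp only [transpose_mul, Matrix.mul_add, Matrix.add_mul, Matrix.mul_assoc]
  rw [hwhole, trace_add]
  exact le_add_of_nonneg_right (hW.posSemidef.trace_mul_mul_transpose_nonneg _)
end
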